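/- Let $D\subset\mathbb{R}^n$, $n\ge 2$, be a domain and $f:D\to\mathbb{R}^n$ a continuous mapping that is differentiable a.e. in $D$ and has the $N$- and $N^{-1}$-properties. Then there is a countable collection of compact sets $C_k^*\subset D$, $k=1,2,\ldots$, such that $m(B_0)=0$ where $B_0=D\setminus\bigcup_{k=1}^\infty C_k^*$, the restriction $f|_{C_k^*}$ is one-to-one and bi-Lipschitz for every $k$, and $f$ is differentiable at every point of each $C_k^*$ with $J(x,f)\ne 0$. -/

import Mathlib

open MeasureTheory Set
open scoped ENNReal Topology NNReal

noncomputable section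

attribute [local instance] Classical.propDecidable

/-- Euclidean space `ℝⁿ`. -/
abbrev Eucl (n : ℕ) := EuclideanSpace ℝ (Fin n)

/-- A curve in `ℝⁿ`: a map defined on a (nonempty) interval `I ⊆ ℝ`. -/
structure Curve (n : ℕ) where
  I : Set ℝ
  ordConn : I.OrdConnected
  nonemp : I.Nonempty
  toFun : ℝ → Eucl n

namespace Curve

variable {n : ℕ}

/-- The locus (image) of a curve. -/
def locus (γ : Curve n) : Set (Eucl n) := γ.toFun '' γ.I

/-- `γ` is a curve in `D`: it is continuous and its locus lies in `D`. -/
def IsCurveIn (γ : Curve n) (D : Set (Eucl n)) : Prop :=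
  ContinuousOn γ.toFun γ.I ∧ γ.locus ⊆ D

/-- The length (total variation) of a curve, in `ℝ≥0∞`. -/
def length (γ : Curve n) : ℝ≥0∞ := eVariationOn γ.toFun γ.I

/-- A curve is rectifiable if it has finite length. -/
def Rectifiable (γ : Curve n) : Prop := γ.length < ⊤

/-- A curve is locally rectifiable if every compact subinterval has finite length. -/
def LocRectifiable (γ : Curve n) : Prop :=
  ∀ a ∈ γ.I, ∀ b ∈ γ.I, eVariationOn γ.toFun (γ.I ∩ Set.Icc a b) < ⊤

/-- A closed curve: one defined on a compact interval `[a,b]`. -/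
def IsClosedCurve (γ : Curve n) : Prop := ∃ a b : ℝ, a ≤ b ∧ γ.I = Set.Icc a b

/-- The length function `l_γ(t)`: length of the part of `γ` up to the parameter `t`
(measured from the left endpoint). -/
def lengthFn (γ : Curve n) (t : ℝ) : ℝ := (eVariationOn γ.toFun (γ.I ∩ Set.Iic t)).toReal

/-- `σ` is a subcurve (subpath) of `γ`. -/
def Subcurve (σ γ : Curve n) : Prop := σ.I ⊆ γ.I ∧ Set.EqOn σ.toFun γ.toFun σ.I

/-- The image curve `f ∘ γ`. -/
def map (f : Eucl n → Eucl n) (γ : Curve n) : Curve n := ⟨γ.I, γ.ordConn, γ.nonemp, f ∘ γ.toFun⟩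

/-- `h` is a normal representation of `γ`: reparametrization by arc length,
`h (l_γ t) = γ t`. -/
def IsNormalRep (γ : Curve n) (h : ℝ → Eucl n) : Prop := ∀ t ∈ γ.I, h (γ.lengthFn t) = γ.toFun t

/-- A choice of a normal representation (junk unless one exists). -/
def normalRep (γ : Curve n) : ℝ → Eucl n := Classical.epsilon γ.IsNormalRep

/-- Line integral `∫_γ ρ |dx|` over a closed (rectifiable) curve, computed via
the normal representation. -/
def closedIntegral (γ : Curve n) (ρ : Eucl n → ℝ≥0∞) : ℝ≥0∞ :=
  ∫⁻ s in Set.Icc (0 : ℝ) γ.length.toReal, ρ (γ.normalRep s)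

/-- Line integral `∫_γ ρ |dx|` over a (locally rectifiable) curve: the supremum of the
integrals over its closed subcurves. -/
def integral (γ : Curve n) (ρ : Eucl n → ℝ≥0∞) : ℝ≥0∞ :=
  ⨆ (σ : Curve n) (_ : σ.Subcurve γ ∧ σ.IsClosedCurve), σ.closedIntegral ρ

end Curve

/-- `ρ` is admissible for the curve family `Γ`: a Borel function with `∫_γ ρ |dx| ≥ 1`
for every locally rectifiable `γ ∈ Γ`. -/
def Admissible {n : ℕ} (ρ : Eucl n → ℝ≥0∞) (Γ : Set (Curve n)) : Prop :=
  Measurable ρ ∧ ∀ γ ∈ Γ, γ.LocRectifiable → 1 ≤ γ.integral ρ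

/-- The `p`-modulus of a curve family. -/
def modulus {n : ℕ} (p : ℝ) (Γ : Set (Curve n)) : ℝ≥0∞ :=
  ⨅ (ρ : Eucl n → ℝ≥0∞) (_ : Admissible ρ Γ), ∫⁻ x, ρ x ^ p

/-- The weighted `p`-modulus `M_{p,ω}` of a curve family. -/
def wModulus {n : ℕ} (p : ℝ) (ω : Eucl n → ℝ≥0∞) (Γ : Set (Curve n)) : ℝ≥0∞ :=
  ⨅ (ρ : Eucl n → ℝ≥0∞) (_ : Admissible ρ Γ), ∫⁻ x, ρ x ^ p * ω x

/-- Luzin `N`-property on `D`. -/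
def NProperty {n : ℕ} (D : Set (Eucl n)) (f : Eucl n → Eucl n) : Prop :=
  ∀ S ⊆ D, volume S = 0 → volume (f '' S) = 0

/-- `N⁻¹`-property on `D`. -/
def NInvProperty {n : ℕ} (D : Set (Eucl n)) (f : Eucl n → Eucl n) : Prop :=
  ∀ S : Set (Eucl n), volume S = 0 → volume (D ∩ f ⁻¹' S) = 0

/-- One-dimensional Luzin `N`-property of `L` on a set `J ⊆ ℝ`. -/
def NProp1 (L : ℝ → ℝ) (J : Set ℝ) : Prop :=
  ∀ S ⊆ J, volume S = 0 → volume (L '' S) = 0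

/-- One-dimensional `N⁻¹`-property of `L` on a set `J ⊆ ℝ`. -/
def NInvProp1 (L : ℝ → ℝ) (J : Set ℝ) : Prop :=
  ∀ S : Set ℝ, volume S = 0 → volume (J ∩ L ⁻¹' S) = 0

/-- `L` is the function `L_{γ,f}`: nondecreasing on `Δ_γ` with `L (l_γ t) = l_{f∘γ} t`. -/
def IsLengthMap {n : ℕ} (f : Eucl n → Eucl n) (γ : Curve n) (L : ℝ → ℝ) : Prop :=
  MonotoneOn L (γ.lengthFn '' γ.I) ∧ ∀ t ∈ γ.I, L (γ.lengthFn t) = (γ.map f).lengthFn t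

/-- The `L^{(1)}_p` property: for `p`-a.e. curve `γ` in `D`, `f∘γ` is locally rectifiable
and `L_{γ,f}` has the `N`-property. -/
def HasL1Property {n : ℕ} (D : Set (Eucl n)) (f : Eucl n → Eucl n) (p : ℝ) : Prop :=
  modulus p {γ : Curve n | γ.IsCurveIn D ∧
    ¬ ((γ.map f).LocRectifiable ∧
        ∀ L : ℝ → ℝ, IsLengthMap f γ L → NProp1 L (γ.lengthFn '' γ.I))} = 0

/-- The `L^{(2)}_q` property: for `q`-a.e. curve `γ'` in `f(D)`, every lifting `γ`
(`f∘γ = γ'`) is locally rectifiable and `L_{γ,f}` has the `N⁻¹`-property. -/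
def HasL2Property {n : ℕ} (D : Set (Eucl n)) (f : Eucl n → Eucl n) (q : ℝ) : Prop :=
  modulus q {γ' : Curve n | γ'.IsCurveIn (f '' D) ∧
    ¬ (∀ γ : Curve n, γ.IsCurveIn D → γ.map f = γ' →
        γ.LocRectifiable ∧
        ∀ L : ℝ → ℝ, IsLengthMap f γ L → NInvProp1 L (γ.lengthFn '' γ.I))} = 0

/-- `l(A) = min_{|h| = 1} |A h|`. -/
def minStretch {n : ℕ} (A : Eucl n →L[ℝ] Eucl n) : ℝ :=
  sInf ((fun h => ‖A h‖) '' {h : Eucl n | ‖h‖ = 1})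

/-- `‖A‖ = max_{|h| = 1} |A h|`. -/
def maxStretch {n : ℕ} (A : Eucl n →L[ℝ] Eucl n) : ℝ :=
  sSup ((fun h => ‖A h‖) '' {h : Eucl n | ‖h‖ = 1})

/-- The inner dilatation `K_{I,q}(x,f)`. -/
def KI {n : ℕ} (q : ℝ) (f : Eucl n → Eucl n) (x : Eucl n) : ℝ≥0∞ :=
  if (fderiv ℝ f x).det ≠ 0 then
    ENNReal.ofReal (|(fderiv ℝ f x).det| / minStretch (fderiv ℝ f x) ^ q)
  else if fderiv ℝ f x = 0 then 1 else ⊤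

/-- The outer dilatation `K_{O,p}(x,f)`. -/
def KO {n : ℕ} (p : ℝ) (f : Eucl n → Eucl n) (x : Eucl n) : ℝ≥0∞ :=
  if (fderiv ℝ f x).det ≠ 0 then
    ENNReal.ofReal (maxStretch (fderiv ℝ f x) ^ p / |(fderiv ℝ f x).det|)
  else if fderiv ℝ f x = 0 then 1 else ⊤

/-- `f` is differentiable almost everywhere in `D`. -/
def DiffAE {n : ℕ} (D : Set (Eucl n)) (f : Eucl n → Eucl n) : Prop :=
  ∀ᵐ x ∂(volume.restrict D), DifferentiableAt ℝ f x

/-- A mapping of finite length `(p,q)`-distortion. -/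
def FiniteLengthDistortion {n : ℕ} (D : Set (Eucl n)) (f : Eucl n → Eucl n) (p q : ℝ) : Prop :=
  DiffAE D f ∧ NProperty D f ∧ NInvProperty D f ∧ HasL1Property D f p ∧ HasL2Property D f q
/-- `g` is absolutely continuous on `[a,b]`. -/
def ACOn {α : Type*} [PseudoMetricSpace α] (g : ℝ → α) (a b : ℝ) : Prop :=
  ∀ ε > 0, ∃ δ > 0, ∀ (k : ℕ) (u v : Fin k → ℝ),
    (∀ i, a ≤ u i ∧ u i ≤ v i ∧ v i ≤ b) →
    (Pairwise fun i j => Disjoint (Set.Ioo (u i) (v i)) (Set.Ioo (u j) (v j))) →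
    (∑ i, (v i - u i)) < δ → (∑ i, dist (g (v i)) (g (u i))) < ε

/-- `g` is the `f`-representation `γ*` of `γ` with respect to `f∘γ`:
`g (l_{f∘γ}(t)) = γ(t)`. -/
def IsFRep {n : ℕ} (f : Eucl n → Eucl n) (γ : Curve n) (g : ℝ → Eucl n) : Prop :=
  ∀ t ∈ γ.I, g ((γ.map f).lengthFn t) = γ.toFun t

/-- The set `E_γ = l_γ(γ⁻¹(E))`, representing `γ ∩ E` on the length interval. -/
def curveInterSet {n : ℕ} (E : Set (Eucl n)) (γ : Curve n) : Set ℝ :=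
  γ.lengthFn '' (γ.I ∩ γ.toFun ⁻¹' E)

/-- The multiplicity `N(f,E) = sup_y card {x ∈ E : f x = y}`. -/
def multiplicityOn {n : ℕ} (f : Eucl n → Eucl n) (E : Set (Eucl n)) : ℕ∞ :=
  ⨆ y : Eucl n, (E ∩ f ⁻¹' {y}).encard

/-- The local (topological) index `i(x,f)` of a discrete open orientation-preserving map:
the multiplicity of `f` on small neighborhoods of `x`. -/
def localIndex {n : ℕ} (D : Set (Eucl n)) (f : Eucl n → Eucl n) (x : Eucl n) : ℕ∞ :=
  ⨅ (U : Set (Eucl n)) (_ : U ∈ nhds x), multiplicityOn f (D ∩ U)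

/-- `f` is discrete on `D`: each fiber consists of isolated points. -/
def DiscreteOn {n : ℕ} (D : Set (Eucl n)) (f : Eucl n → Eucl n) : Prop :=
  ∀ y : Eucl n, ∀ x ∈ D ∩ f ⁻¹' {y}, ∃ U ∈ nhds x, U ∩ (D ∩ f ⁻¹' {y}) = {x}

/-- `f` is an open map on `D`. -/
def OpenOn {n : ℕ} (D : Set (Eucl n)) (f : Eucl n → Eucl n) : Prop :=
  ∀ U ⊆ D, IsOpen U → IsOpen (f '' U)

/-- `G` is a normal domain for `f` (relative to the domain `D`). -/
def IsNormalDomain {n : ℕ} (D : Set (Eucl n)) (f : Eucl n → Eucl n) (G : Set (Eucl n)) : Prop :=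
  IsOpen G ∧ IsConnected G ∧ closure G ⊆ D ∧ frontier (f '' G) = f '' frontier G

/-- The line through the "hyperplane point" `z` in coordinate direction `i`. -/
def stdLine {n : ℕ} (i : Fin n) (z : {j : Fin n // j ≠ i} → ℝ) (t : ℝ) : Eucl n :=
  WithLp.toLp 2 (fun j => if h : j = i then t else z ⟨j, h⟩)

/-- `u` is ACL (absolutely continuous on lines) on the open set `A`: on every closed
coordinate box inside `A`, `u` is absolutely continuous on almost every line segment
parallel to each coordinate axis. -/
def ACLOn {n : ℕ} (u : Eucl n → ℝ) (A : Set (Eucl n)) : Prop :=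
  ∀ (i : Fin n) (p q : Fin n → ℝ),
    {x : Eucl n | ∀ j, x j ∈ Set.Icc (p j) (q j)} ⊆ A →
      ∀ᵐ z : ({j : Fin n // j ≠ i} → ℝ) ∂volume,
        (∀ j : {j : Fin n // j ≠ i}, z j ∈ Set.Icc (p j) (q j)) →
          ACOn (fun t => u (stdLine i z t)) (p i) (q i)

/-- The partial derivative `∂ᵢ u (x)`. -/
def partialDeriv' {n : ℕ} (i : Fin n) (u : Eucl n → ℝ) (x : Eucl n) : ℝ :=
  deriv (fun t : ℝ => u (x + t • EuclideanSpace.single i (1 : ℝ))) 0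

/-- `|∇u|(x) = (∑ i (∂ᵢ u)²)^{1/2}`. -/
def gradNorm {n : ℕ} (u : Eucl n → ℝ) (x : Eucl n) : ℝ :=
  Real.sqrt (∑ i, partialDeriv' i u x ^ 2)

/-- The class `W₀(E) = W₀(A,C)` of test functions for the capacity. -/
def W0 {n : ℕ} (A C : Set (Eucl n)) : Set (Eucl n → ℝ) :=
  {u | Continuous u ∧ HasCompactSupport u ∧ tsupport u ⊆ A ∧
    (∀ x, 0 ≤ u x) ∧ (∀ x ∈ C, 1 ≤ u x) ∧ ACLOn u A}

/-- The `q`-capacity of the condenser `E = (A,C)`. -/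
def capq {n : ℕ} (q : ℝ) (A C : Set (Eucl n)) : ℝ≥0∞ :=
  ⨅ (u : Eucl n → ℝ) (_ : u ∈ W0 A C), ∫⁻ x in A, ENNReal.ofReal (gradNorm u x ^ q)

/-- The `ω`-weighted `q`-capacity of the condenser `E = (A,C)`, with test functions
`u ∈ C₀^∞(A)`, `u ≥ 1` on `C`. -/
def capWq {n : ℕ} (q : ℝ) (ω : Eucl n → ℝ≥0∞) (A C : Set (Eucl n)) : ℝ≥0∞ :=
  ⨅ (u : Eucl n → ℝ) (_ : ContDiff ℝ (⊤ : ℕ∞) u ∧ HasCompactSupport u ∧ tsupport u ⊆ A ∧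
      ∀ x ∈ C, 1 ≤ u x),
    ∫⁻ x in A, ENNReal.ofReal (gradNorm u x ^ q) * ω x

/-- The curve family `Γ_E` associated with a condenser `E = (A,C)`: curves
`γ : [a,b) → A` with `γ(a) ∈ C` whose locus meets `A \ F` for every compact `F ⊆ A`. -/
def condenserFamily {n : ℕ} (A C : Set (Eucl n)) : Set (Curve n) :=
  {γ : Curve n | (∃ a b : ℝ, a < b ∧ γ.I = Set.Ico a b ∧ γ.toFun a ∈ C) ∧
    γ.IsCurveIn A ∧
    ∀ F : Set (Eucl n), F ⊆ A → IsCompact F → (γ.locus ∩ (A \ F)).Nonempty}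

/-- The minimal multiplicity `M(f,C) = inf_{y ∈ f(C)} ∑_{x ∈ f⁻¹(y) ∩ C} i(x,f)`
(as an extended real). -/
def minMultiplicity {n : ℕ} (D : Set (Eucl n)) (f : Eucl n → Eucl n) (C : Set (Eucl n)) :
    ℝ≥0∞ :=
  ⨅ (y : Eucl n) (_ : y ∈ f '' C),
    ∑' x : ↥(f ⁻¹' {y} ∩ C), ((localIndex D f x : ℕ∞) : ℝ≥0∞)


/-- Any measurable set in `ℝⁿ` can be exhausted, up to a null set, by countably many
compact subsets. -/
lemma exists_compact_cover_ae {n : ℕ} (A : Set (Eucl n)) (hA : MeasurableSet A) :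
    ∃ K : ℕ → Set (Eucl n), (∀ k, IsCompact (K k) ∧ K k ⊆ A) ∧
      volume (A \ ⋃ k, K k) = 0 := by
  have H : ∀ p : ℕ × ℕ, ∃ K : Set (Eucl n),
      K ⊆ A ∩ Metric.closedBall 0 p.1 ∧ IsCompact K ∧
      volume ((A ∩ Metric.closedBall 0 p.1) \ K) < ((p.2 : ℝ≥0∞) + 1)⁻¹ := fun p => by
    refine (hA.inter measurableSet_closedBall).exists_isCompact_diff_lt ?_ ?_
    · exact ne_top_of_le_ne_top measure_closedBall_lt_top.ne
        (measure_mono inter_subset_right)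
    · exact ENNReal.inv_ne_zero.2 (by simp)
  choose Kp hKp1 hKp2 hKp3 using H
  refine ⟨fun k => Kp (Denumerable.ofNat (ℕ × ℕ) k), fun k =>
    ⟨hKp2 _, (hKp1 _).trans inter_subset_left⟩, ?_⟩
  have hsub : ∀ p : ℕ × ℕ, Kp p ⊆ ⋃ k, Kp (Denumerable.ofNat (ℕ × ℕ) k) := by
    intro p x hx
    exact mem_iUnion.2 ⟨Encodable.encode p, by rw [Denumerable.ofNat_encode]; exact hx⟩
  -- for each j, the part of A in the ball of radius j minus the union is null
  have Hj : ∀ j : ℕ, volume ((A ∩ Metric.closedBall 0 j) \ ⋃ k,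
      Kp (Denumerable.ofNat (ℕ × ℕ) k)) = 0 := by
    intro j
    by_contra hne
    obtain ⟨m, hm⟩ : ∃ m : ℕ, ((m : ℝ≥0∞) + 1)⁻¹ <
        volume ((A ∩ Metric.closedBall 0 j) \ ⋃ k, Kp (Denumerable.ofNat (ℕ × ℕ) k)) := by
      rcases ENNReal.exists_inv_nat_lt hne with ⟨m, hm⟩
      exact ⟨m, lt_of_le_of_lt (ENNReal.inv_le_inv.2 (by
        exact_mod_cast le_add_right le_rfl)) hm⟩
    have := (measure_mono (diff_subset_diff_right (hsub (j, m)))).trans_lt (hKp3 (j, m))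
    exact absurd this (not_lt.2 hm.le)
  have hcov : A ⊆ ⋃ j : ℕ, A ∩ Metric.closedBall 0 j := by
    intro x hx
    obtain ⟨j, hj⟩ := exists_nat_ge (dist x 0)
    exact mem_iUnion.2 ⟨j, hx, Metric.mem_closedBall.2 hj⟩
  refine le_antisymm ?_ zero_le
  calc volume (A \ ⋃ k, Kp (Denumerable.ofNat (ℕ × ℕ) k))
      ≤ volume (⋃ j : ℕ, (A ∩ Metric.closedBall 0 j) \ ⋃ k,
          Kp (Denumerable.ofNat (ℕ × ℕ) k)) := by
        refine measure_mono fun x hx => ?_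
        obtain ⟨j, hj⟩ := mem_iUnion.1 (hcov hx.1)
        exact mem_iUnion.2 ⟨j, hj, hx.2⟩
    _ ≤ ∑' j : ℕ, volume ((A ∩ Metric.closedBall 0 j) \ ⋃ k,
          Kp (Denumerable.ofNat (ℕ × ℕ) k)) := measure_iUnion_le _
    _ = 0 := by simp only [Hj, tsum_zero]

/-- Proposition 2.2: a.e.-differentiable mappings with the `N`- and
`N⁻¹`-properties admit a countable exhaustion (up to a null set) by compact sets on which
they are injective and bi-Lipschitz, with nonvanishing Jacobian. -/
theorem exists_compact_exhaustion_biLipschitz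
    {n : ℕ} (hn : 2 ≤ n) (D : Set (Eucl n)) (hD : IsOpen D) (hD' : IsConnected D)
    (f : Eucl n → Eucl n) (hfc : ContinuousOn f D)
    (hdiff : DiffAE D f) (hN : NProperty D f) (hNinv : NInvProperty D f) :
    ∃ C : ℕ → Set (Eucl n),
      (∀ k, IsCompact (C k) ∧ C k ⊆ D) ∧
      volume (D \ ⋃ k, C k) = 0 ∧
      ∀ k, Set.InjOn f (C k) ∧
        (∃ M M' : ℝ, 0 < M' ∧ ∀ x ∈ C k, ∀ y ∈ C k,
          M' * dist x y ≤ dist (f x) (f y) ∧ dist (f x) (f y) ≤ M * dist x y) ∧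
        ∀ x ∈ C k, DifferentiableAt ℝ f x ∧ (fderiv ℝ f x).det ≠ 0 := by
  haveI : Nonempty (Fin n) := ⟨⟨0, by omega⟩⟩
  classical
  -- the good set: points of `D` where `f` is differentiable with nonzero Jacobian
  set s : Set (Eucl n) :=
    {x | x ∈ D ∧ DifferentiableAt ℝ f x ∧ (fderiv ℝ f x).det ≠ 0} with hs_def
  have hsD : s ⊆ D := fun x hx => hx.1
  -- `s` is measurable
  have hs_meas : MeasurableSet s := by
    have h1 : MeasurableSet {x : Eucl n | DifferentiableAt ℝ f x} :=
      measurableSet_of_differentiableAt ℝ f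
    have h2 : MeasurableSet {x : Eucl n | (fderiv ℝ f x).det ≠ 0} := by
      have : Measurable fun x => (fderiv ℝ f x).det :=
        ContinuousLinearMap.continuous_det.measurable.comp (measurable_fderiv ℝ f)
      exact (this (measurableSet_singleton 0)).compl
    have : s = D ∩ ({x : Eucl n | DifferentiableAt ℝ f x} ∩
        {x : Eucl n | (fderiv ℝ f x).det ≠ 0}) := by
      ext x
      simp only [hs_def, mem_setOf_eq, mem_inter_iff]
      try tauto
    rw [this]
    exact hD.measurableSet.inter (h1.inter h2)
  -- `D \ s` is null
  have hDs : volume (D \ s) = 0 := by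
    -- the non-differentiability set is null
    have hB : volume (D ∩ {x | ¬ DifferentiableAt ℝ f x}) = 0 := by
      have := hdiff
      rw [DiffAE, ae_iff, Measure.restrict_apply' hD.measurableSet] at this
      simpa [Set.inter_comm] using this
    -- the zero-Jacobian set is null
    set Z : Set (Eucl n) :=
      {x | x ∈ D ∧ DifferentiableAt ℝ f x ∧ (fderiv ℝ f x).det = 0} with hZ_def
    have hfZ : volume (f '' Z) = 0 := by
      refine addHaar_image_eq_zero_of_det_fderivWithin_eq_zero volume
        (f' := fun x => fderiv ℝ f x) (fun x hx => ?_) (fun x hx => hx.2.2)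
      exact hx.2.1.hasFDerivAt.hasFDerivWithinAt
    have hZ : volume Z = 0 := by
      have hsub : Z ⊆ D ∩ f ⁻¹' (f '' Z) := fun x hx =>
        ⟨hx.1, Set.mem_image_of_mem f hx⟩
      exact measure_mono_null hsub (hNinv _ hfZ)
    have hsub : D \ s ⊆ (D ∩ {x | ¬ DifferentiableAt ℝ f x}) ∪ Z := by
      intro x hx
      by_cases hdx : DifferentiableAt ℝ f x
      · right
        refine ⟨hx.1, hdx, ?_⟩
        by_contra hne
        exact hx.2 ⟨hx.1, hdx, hne⟩
      · exact Or.inl ⟨hx.1, hdx⟩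
    exact measure_mono_null hsub (measure_union_null hB hZ)
  rcases Set.eq_empty_or_nonempty s with hse | hsne
  · -- `s` empty: `D` itself is null, take all sets empty
    refine ⟨fun _ => ∅, fun k => ⟨isCompact_empty, empty_subset _⟩, ?_, fun k =>
      ⟨fun x hx => absurd hx (notMem_empty x), ⟨1, 1, one_pos, fun x hx => absurd hx
        (notMem_empty x)⟩, fun x hx => absurd hx (notMem_empty x)⟩⟩
    have : D \ ⋃ _ : ℕ, (∅ : Set (Eucl n)) = D \ s := by rw [hse]; simp
    rw [this]; exact hDs
  -- main case: approximate `f` by linear maps on a countable partition of `s`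
  have hderiv : ∀ x ∈ s, HasFDerivWithinAt f (fderiv ℝ f x) s x := fun x hx =>
    hx.2.1.hasFDerivAt.hasFDerivWithinAt
  -- choice of the approximation accuracy
  set r : (Eucl n →L[ℝ] Eucl n) → ℝ≥0 := fun A =>
    if h : A.det ≠ 0 then
      ‖((A.toContinuousLinearEquivOfDetNeZero h).symm : Eucl n →L[ℝ] Eucl n)‖₊⁻¹ / 2
    else 1 with hr_def
  have hsymm_ne : ∀ (A : Eucl n →L[ℝ] Eucl n) (h : A.det ≠ 0),
      ‖((A.toContinuousLinearEquivOfDetNeZero h).symm : Eucl n →L[ℝ] Eucl n)‖₊ ≠ 0 := by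
    intro A h hc
    obtain ⟨x, hx⟩ := exists_ne (0 : Eucl n)
    set B := A.toContinuousLinearEquivOfDetNeZero h with hB
    have hnorm : ‖(B.symm : Eucl n →L[ℝ] Eucl n)‖ = 0 := by
      have := congrArg NNReal.toReal hc
      simpa [coe_nnnorm] using this
    have h1 : ‖B.symm x‖ ≤ 0 := by
      have := (B.symm : Eucl n →L[ℝ] Eucl n).le_opNorm x
      rw [hnorm] at this
      simpa using this
    have h2 : B.symm x = 0 := norm_le_zero_iff.1 h1
    exact hx (by simpa using congrArg B h2)
  have hrpos : ∀ A, r A ≠ 0 := by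
    intro A
    simp only [hr_def]
    split_ifs with h
    · have := hsymm_ne A h
      positivity
    · exact one_ne_zero
  obtain ⟨t, A, -, ht_meas, hcover, happrox, hAy⟩ :=
    exists_partition_approximatesLinearOn_of_hasFDerivWithinAt f s
      (fun x => fderiv ℝ f x) hderiv r hrpos
  have hAdet : ∀ m, (A m).det ≠ 0 := by
    intro m
    obtain ⟨y, hy, hAy'⟩ := hAy hsne m
    rw [hAy']; exact hy.2.2
  -- on each piece, `f` is bi-Lipschitz
  have hbil : ∀ m, Set.InjOn f (s ∩ t m) ∧
      ∃ M M' : ℝ, 0 < M' ∧ ∀ x ∈ s ∩ t m, ∀ y ∈ s ∩ t m,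
        M' * dist x y ≤ dist (f x) (f y) ∧ dist (f x) (f y) ≤ M * dist x y := by
    intro m
    set B := (A m).toContinuousLinearEquivOfDetNeZero (hAdet m) with hB_def
    set N := ‖(B.symm : Eucl n →L[ℝ] Eucl n)‖₊ with hN_def
    have hN0 : N ≠ 0 := hsymm_ne _ _
    have hrA : r (A m) = N⁻¹ / 2 := by
      simp only [hr_def, dif_pos (hAdet m)]
      rfl
    have hc_lt : r (A m) < N⁻¹ := by
      rw [hrA]
      exact NNReal.half_lt_self (by positivity)
    have happB : ApproximatesLinearOn f (B : Eucl n →L[ℝ] Eucl n) (s ∩ t m) (r (A m)) := by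
      rw [hB_def, ContinuousLinearMap.coe_toContinuousLinearEquivOfDetNeZero]
      exact happrox m
    have hanti := happB.antilipschitz (Or.inr hc_lt)
    have hlip := happB.lipschitz
    refine ⟨happB.injOn (Or.inr hc_lt), ?_⟩
    set K : ℝ≥0 := (N⁻¹ - r (A m))⁻¹ with hK_def
    have hKne : (N⁻¹ - r (A m)) ≠ 0 := (tsub_pos_of_lt hc_lt).ne'
    have hKpos : (0 : ℝ) < (K : ℝ) := by
      rw [hK_def]
      have : (N⁻¹ - r (A m))⁻¹ ≠ 0 := by
        simp only [ne_eq, inv_eq_zero]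
        exact hKne
      positivity
    refine ⟨(‖(B : Eucl n →L[ℝ] Eucl n)‖₊ + r (A m) : ℝ≥0), (K : ℝ)⁻¹, by positivity,
      fun x hx y hy => ⟨?_, ?_⟩⟩
    · have h1 : dist x y ≤ (K : ℝ) * dist (f x) (f y) := by
        have := hanti.le_mul_dist ⟨x, hx⟩ ⟨y, hy⟩
        simpa [Subtype.dist_eq, Set.restrict] using this
      calc (K : ℝ)⁻¹ * dist x y ≤ (K : ℝ)⁻¹ * ((K : ℝ) * dist (f x) (f y)) := by
            exact mul_le_mul_of_nonneg_left h1 (by positivity)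
        _ = dist (f x) (f y) := by field_simp
    · have := hlip.dist_le_mul ⟨x, hx⟩ ⟨y, hy⟩
      simpa [Subtype.dist_eq, Set.restrict] using this
  -- exhaust each piece by compact sets
  have hKm : ∀ m : ℕ, ∃ K : ℕ → Set (Eucl n),
      (∀ k, IsCompact (K k) ∧ K k ⊆ s ∩ t m) ∧
      volume ((s ∩ t m) \ ⋃ k, K k) = 0 := fun m =>
    exists_compact_cover_ae _ (hs_meas.inter (ht_meas m))
  choose K hK1 hK2 using hKm
  refine ⟨fun k => K (Denumerable.ofNat (ℕ × ℕ) k).1 (Denumerable.ofNat (ℕ × ℕ) k).2,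
    fun k => ⟨(hK1 _ _).1, ((hK1 _ _).2.trans inter_subset_left).trans hsD⟩, ?_, fun k => ?_⟩
  · -- the leftover set is null
    have hsub : D \ (⋃ k, K (Denumerable.ofNat (ℕ × ℕ) k).1
        (Denumerable.ofNat (ℕ × ℕ) k).2) ⊆
        (D \ s) ∪ ⋃ m, ((s ∩ t m) \ ⋃ j, K m j) := by
      intro x hx
      by_cases hxs : x ∈ s
      · right
        obtain ⟨m, hm⟩ := mem_iUnion.1 (hcover hxs)
        refine mem_iUnion.2 ⟨m, ⟨hxs, hm⟩, ?_⟩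
        intro hxK
        obtain ⟨j, hj⟩ := mem_iUnion.1 hxK
        refine hx.2 (mem_iUnion.2 ⟨Encodable.encode (m, j), ?_⟩)
        simpa using hj
      · exact Or.inl ⟨hx.1, hxs⟩
    refine measure_mono_null hsub (measure_union_null hDs ?_)
    refine measure_iUnion_null fun m => hK2 m
  · -- properties on each compact set
    set m := (Denumerable.ofNat (ℕ × ℕ) k).1
    set j := (Denumerable.ofNat (ℕ × ℕ) k).2
    have hsubm : K m j ⊆ s ∩ t m := (hK1 m j).2
    obtain ⟨hinj, M, M', hM'pos, hbl⟩ := hbil m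
    refine ⟨hinj.mono hsubm, ⟨M, M', hM'pos, fun x hx y hy =>
      hbl x (hsubm hx) y (hsubm hy)⟩, fun x hx => ?_⟩
    have := (hsubm hx).1
    exact ⟨this.2.1, this.2.2⟩
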